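/- arXiv:1809.00080 — 2 statements merged into one kernel-verified Lean document; each statement's English description precedes it below -/
import Mathlib

section
/- For fixed λ > 0, a ≥ 0, b ≥ 0, the function μ ↦ λ²(1 + (a + b/μ²)μ²)/(2μ(μ−λ)) + λ/μ is convex on (λ, ∞). -/
/-!
Partial fractions split the waiting time on `(λ, ∞)` into a constant plus nonnegative multiples
of `(μ - λ)⁻¹`, `μ⁻¹` and `μ⁻¹ (μ - λ)⁻¹`. The first two are translates of the convex function
`x ↦ x⁻¹`, and the last is a product of two nonnegative, convex, decreasing functions, hence
convex as well.
-/

open Set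

section

variable {𝕜 : Type*} [Field 𝕜] [LinearOrder 𝕜] [IsStrictOrderedRing 𝕜]

lemma convexOn_inv_Ioi : ConvexOn 𝕜 (Ioi 0) fun x : 𝕜 ↦ x⁻¹ := by
  simpa using convexOn_zpow (𝕜 := 𝕜) (-1)

lemma convexOn_sub_inv_Ioi (c : 𝕜) : ConvexOn 𝕜 (Ioi c) fun x ↦ (x - c)⁻¹ := by
  convert convexOn_inv_Ioi.translate_right (-c) using 1 <;> ext x <;> simp [sub_eq_neg_add]

lemma convexOn_inv_mul_sub_inv_Ioi {c : 𝕜} (hc : 0 ≤ c) :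
    ConvexOn 𝕜 (Ioi c) fun x ↦ x⁻¹ * (x - c)⁻¹ := by
  have hsub : Ioi c ⊆ Ioi 0 := Ioi_subset_Ioi hc
  exact (convexOn_inv_Ioi.subset hsub (convex_Ioi c)).mul (convexOn_sub_inv_Ioi c)
    (fun x hx ↦ inv_nonneg.2 (hsub hx).le) (fun x hx ↦ inv_nonneg.2 (sub_pos.2 hx).le)
    ((inv_antitoneOn_Ioi.mono hsub).monovaryOn sub_inv_antitoneOn_Ioi)

end

lemma waitingTime_eq_partialFractions {lam μ : ℝ} (a b : ℝ) (hlam : 0 < lam) (hμ : lam < μ) :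
    lam ^ 2 * (1 + (a + b / μ ^ 2) * μ ^ 2) / (2 * μ * (μ - lam)) + lam / μ =
      a * lam ^ 3 / 2 * (μ - lam)⁻¹ + lam * μ⁻¹
        + lam ^ 2 * (1 + b) / 2 * (μ⁻¹ * (μ - lam)⁻¹) + a * lam ^ 2 / 2 := by
  have hμ₀ : μ ≠ 0 := (hlam.trans hμ).ne'
  have hμlam : μ - lam ≠ 0 := (sub_pos.2 hμ).ne'
  field_simp
  ring

theorem total_waiting_convex_in_mu (lam a b : ℝ) (hlam : 0 < lam) (ha : 0 ≤ a) (hb : 0 ≤ b) :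
    ConvexOn ℝ (Set.Ioi lam)
      (fun μ : ℝ => lam ^ 2 * (1 + (a + b / μ ^ 2) * μ ^ 2) / (2 * μ * (μ - lam)) + lam / μ) := by
  have hinv : ConvexOn ℝ (Ioi lam) fun μ : ℝ ↦ μ⁻¹ :=
    convexOn_inv_Ioi.subset (Ioi_subset_Ioi hlam.le) (convex_Ioi lam)
  have hsum := ((((convexOn_sub_inv_Ioi lam).smul (by positivity : 0 ≤ a * lam ^ 3 / 2)).add
    (hinv.smul hlam.le)).add ((convexOn_inv_mul_sub_inv_Ioi hlam.le).smul
      (by positivity : 0 ≤ lam ^ 2 * (1 + b) / 2))).add_const (a * lam ^ 2 / 2)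
  exact hsum.congr fun μ hμ ↦ (waitingTime_eq_partialFractions a b hlam hμ).symm
end

section
/- Let a ≥ 0 and 0 ≤ b ≤ 1. The function WT_I(λ,μ) = λ(1 + (a + b/μ²)μ²)/(2μ(μ−λ)) + 1/μ is jointly convex on the set {(λ,μ) : 0 ≤ λ < μ}. -/
/-!
On the domain, `b / μ² * μ² = b` and `λ / (μ (μ - λ)) = 1 / (μ - λ) - 1 / μ`, so
`WT_I(λ, μ) = (1 + b)/2 · 1/(μ - λ) + (1 - b)/2 · 1/μ + a/2 · (μ² / (μ - λ) - μ)`.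
For `a ≥ 0` and `|b| ≤ 1` every coefficient is nonnegative, and each term is convex: the
reciprocal of a positive linear form, and the quadratic-over-linear function `x² / y` composed
with a linear map, minus a linear function.
-/

open Set

theorem convexOn_sq_div : ConvexOn ℝ {p : ℝ × ℝ | 0 < p.2} fun p => p.1 ^ 2 / p.2 := by
  refine ⟨convex_halfSpace_gt (LinearMap.snd ℝ ℝ ℝ).isLinear 0, ?_⟩
  rintro ⟨x, s⟩ (hs : 0 < s) ⟨y, t⟩ (ht : 0 < t) α β hα hβ hαβ
  have hst : 0 < α * s + β * t := convex_Ioi (0 : ℝ) hs ht hα hβ hαβ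
  obtain rfl : β = 1 - α := by linarith
  simp only [Prod.smul_mk, Prod.mk_add_mk, smul_eq_mul]
  rw [mul_div_assoc', mul_div_assoc', div_add_div _ _ hs.ne' ht.ne',
    div_le_div_iff₀ hst (by positivity)]
  nlinarith [mul_nonneg (mul_nonneg hα hβ) (sq_nonneg (x * t - y * s))]

section LinearForms

variable {E : Type*} [AddCommGroup E] [Module ℝ E]

theorem convexOn_sq_div_linearMap (f g : E →ₗ[ℝ] ℝ) :
    ConvexOn ℝ {x | 0 < g x} fun x => f x ^ 2 / g x :=
  convexOn_sq_div.comp_linearMap (f.prod g)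

theorem convexOn_inv_linearMap (ℓ : E →ₗ[ℝ] ℝ) :
    ConvexOn ℝ {x | 0 < ℓ x} fun x => (ℓ x)⁻¹ :=
  ((convexOn_zpow (-1)).comp_linearMap ℓ).congr fun x _ => by simp

end LinearForms

theorem individual_waiting_jointly_convex (a b : ℝ) (ha : 0 ≤ a) (hb0 : 0 ≤ b) (hb1 : b ≤ 1) :
    ConvexOn ℝ {p : ℝ × ℝ | 0 ≤ p.1 ∧ p.1 < p.2}
      (fun p : ℝ × ℝ =>
        p.1 * (1 + (a + b / p.2 ^ 2) * p.2 ^ 2) / (2 * p.2 * (p.2 - p.1)) + 1 / p.2) := by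
  set S := {p : ℝ × ℝ | 0 ≤ p.1 ∧ p.1 < p.2}
  set service := LinearMap.snd ℝ ℝ ℝ
  set slack := service - LinearMap.fst ℝ ℝ ℝ
  have hS : Convex ℝ S := by
    have := ((convex_Ici 0).linear_preimage (LinearMap.fst ℝ ℝ ℝ)).inter
      ((convex_Ioi 0).linear_preimage slack)
    simp only [preimage, mem_Ici, mem_Ioi, slack, LinearMap.sub_apply, sub_pos] at this
    exact this
  have hslack : ∀ p ∈ S, 0 < slack p := fun p hp => sub_pos.2 hp.2
  have hservice : ∀ p ∈ S, 0 < service p := fun p hp => hp.1.trans_lt hp.2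
  have h₁ := ((convexOn_inv_linearMap slack).subset hslack hS).smul
    (by linarith : 0 ≤ (1 + b) / 2)
  have h₂ := ((convexOn_inv_linearMap service).subset hservice hS).smul
    (by linarith : 0 ≤ (1 - b) / 2)
  have h₃ := ((convexOn_sq_div_linearMap service slack).subset hslack hS).smul
    (by linarith : 0 ≤ a / 2)
  have h₄ := (service.concaveOn hS).smul (by linarith : 0 ≤ a / 2)
  refine (((h₁.add h₂).add h₃).sub h₄).congr ?_
  rintro ⟨l, m⟩ ⟨hl, hlm⟩
  have hm : 0 < m := hl.trans_lt hlm
  have hd : 0 < m - l := sub_pos.2 hlm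
  simp only [Pi.sub_apply, Pi.add_apply, smul_eq_mul, slack, service,
    LinearMap.sub_apply, LinearMap.fst_apply, LinearMap.snd_apply]
  field_simp
  ring
end
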